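/- arXiv:1610.02686 — 5 statements merged into one kernel-verified Lean document; each statement's English description precedes it below -/
import Mathlib

section
/- For every integer l ≥ 0, if T is a uniformly random subset of size t of a set S of size m, with S' ⊆ S of size k, then Prob(|T ∩ S'| ≥ l) ≤ (t·k/m)^l. -/
/-!
A `t`-subset `T` meeting `S'` in at least `l` points contains some `l`-subset `A` of `S'`.
The union bound over `A` gives at most `C(k,l) C(m-l,t-l)` such `T`, and
`C(m,l) C(m-l,t-l) = C(m,t) C(t,l)` turns the probability bound into
`C(k,l) C(t,l) / C(m,l)`. Finally `C(k,l) ≤ k^l` and `C(t,l) / C(m,l) ≤ (t/m)^l`, the latter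
because `(t - i) / (m - i) ≤ t / m` for every factor of the falling factorials.
-/

open Finset

namespace Nat

theorem descFactorial_mul_pow_le_of_le {t m : ℕ} (htm : t ≤ m) (l : ℕ) :
    t.descFactorial l * m ^ l ≤ m.descFactorial l * t ^ l := by
  induction l with
  | zero => simp
  | succ l ih =>
    have step : (t - l) * m ≤ (m - l) * t := by
      rw [Nat.sub_mul, Nat.sub_mul, Nat.mul_comm m t]
      exact Nat.sub_le_sub_left (Nat.mul_le_mul_left l htm) _
    calc t.descFactorial (l + 1) * m ^ (l + 1)
        = ((t - l) * m) * (t.descFactorial l * m ^ l) := by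
          rw [descFactorial_succ, pow_succ]; ring
      _ ≤ ((m - l) * t) * (m.descFactorial l * t ^ l) := Nat.mul_le_mul step ih
      _ = m.descFactorial (l + 1) * t ^ (l + 1) := by
          rw [descFactorial_succ, pow_succ]; ring

theorem choose_mul_pow_le_of_le {t m : ℕ} (htm : t ≤ m) (l : ℕ) :
    t.choose l * m ^ l ≤ m.choose l * t ^ l := by
  have h := descFactorial_mul_pow_le_of_le htm l
  rw [descFactorial_eq_factorial_mul_choose, descFactorial_eq_factorial_mul_choose,
    Nat.mul_assoc, Nat.mul_assoc] at h
  exact Nat.le_of_mul_le_mul_left h (factorial_pos l)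

theorem cast_choose_div_choose_le_pow {α : Type*} [Field α] [LinearOrder α]
    [IsStrictOrderedRing α] {t m : ℕ} (htm : t ≤ m) (l : ℕ) :
    (t.choose l : α) / m.choose l ≤ ((t : α) / m) ^ l := by
  rcases Nat.eq_zero_or_pos m with rfl | hm
  · obtain rfl : t = 0 := Nat.le_zero.1 htm
    rcases l with _ | l <;> simp
  rcases Nat.eq_zero_or_pos (m.choose l) with hml | hml
  · simp only [hml, cast_zero, div_zero]
    positivity
  rw [div_pow, div_le_div_iff₀ (by exact_mod_cast hml) (by positivity), mul_comm ((t : α) ^ l)]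
  exact_mod_cast choose_mul_pow_le_of_le htm l

end Nat

namespace Finset

variable {α : Type*} [DecidableEq α] {S S' : Finset α}

theorem card_powersetCard_filter_le_card_inter_le (hsub : S' ⊆ S) {l t : ℕ} (hlt : l ≤ t) :
    #{T ∈ S.powersetCard t | l ≤ #(T ∩ S')} ≤ (#S').choose l * (#S - l).choose (t - l) := by
  calc #{T ∈ S.powersetCard t | l ≤ #(T ∩ S')}
      ≤ #((S'.powersetCard l).biUnion fun A => {T ∈ S.powersetCard t | A ⊆ T}) := by
        refine card_le_card fun T hT => ?_
        rw [mem_filter] at hT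
        obtain ⟨A, hA, hAl⟩ := exists_subset_card_eq hT.2
        exact mem_biUnion.2 ⟨A, mem_powersetCard.2 ⟨hA.trans inter_subset_right, hAl⟩,
          mem_filter.2 ⟨hT.1, hA.trans inter_subset_left⟩⟩
    _ ≤ ∑ A ∈ S'.powersetCard l, #{T ∈ S.powersetCard t | A ⊆ T} := card_biUnion_le
    _ = ∑ _A ∈ S'.powersetCard l, (#S - l).choose (t - l) := sum_congr rfl fun A hA => by
        obtain ⟨hAS', hAl⟩ := mem_powersetCard.1 hA
        rw [card_filter_powersetCard_subset _ _ _ (hAS'.trans hsub) (hAl ▸ hlt), hAl]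
    _ = (#S').choose l * (#S - l).choose (t - l) := by
        rw [sum_const, card_powersetCard, smul_eq_mul]

theorem card_powersetCard_filter_le_card_inter_div_le (hsub : S' ⊆ S) {t : ℕ} (ht : t ≤ #S)
    (l : ℕ) :
    (#{T ∈ S.powersetCard t | l ≤ #(T ∩ S')} : ℝ) / (#S).choose t
      ≤ (#S').choose l * ((t.choose l : ℝ) / (#S).choose l) := by
  by_cases hlt : l ≤ t
  · have hmt : (0 : ℝ) < (#S).choose t := by exact_mod_cast Nat.choose_pos ht
    have hml : (0 : ℝ) < (#S).choose l := by exact_mod_cast Nat.choose_pos (hlt.trans ht)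
    have hcount : (#{T ∈ S.powersetCard t | l ≤ #(T ∩ S')} : ℝ)
        ≤ (#S').choose l * (#S - l).choose (t - l) := by
      exact_mod_cast card_powersetCard_filter_le_card_inter_le hsub hlt
    have hchoose :
        (t.choose l : ℝ) * (#S).choose t = (#S).choose l * (#S - l).choose (t - l) := by
      rw [mul_comm]
      exact_mod_cast Nat.choose_mul hlt
    rw [div_le_iff₀ hmt, mul_assoc, div_mul_eq_mul_div, hchoose, mul_div_cancel_left₀ _ hml.ne']
    exact hcount
  · have hempty : {T ∈ S.powersetCard t | l ≤ #(T ∩ S')} = ∅ := by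
      refine filter_false_of_mem fun T hT hl => hlt ?_
      rw [← (mem_powersetCard.1 hT).2]
      exact hl.trans (card_le_card inter_subset_left)
    rw [hempty, card_empty, Nat.cast_zero, zero_div]
    positivity

end Finset

theorem stmt0_general {α : Type*} [DecidableEq α] (S S' : Finset α) (m k t l : ℕ)
    (hS : S.card = m) (hsub : S' ⊆ S) (hk : S'.card = k) (ht : t ≤ m) :
    (((S.powersetCard t).filter (fun T => l ≤ (T ∩ S').card)).card : ℝ) / (m.choose t : ℝ)
      ≤ ((t * k : ℝ) / m) ^ l := by
  subst hS hk
  calc _ ≤ (#S').choose l * ((t.choose l : ℝ) / (#S).choose l) :=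
        card_powersetCard_filter_le_card_inter_div_le hsub ht l
    _ ≤ (#S' : ℝ) ^ l * ((t : ℝ) / #S) ^ l :=
        mul_le_mul (by exact_mod_cast Nat.choose_le_pow _ _)
          (Nat.cast_choose_div_choose_le_pow ht l) (by positivity) (by positivity)
    _ = ((t * #S' : ℝ) / #S) ^ l := by rw [← mul_pow]; ring

/-- Hypergeometric tail bound: if `T` is a uniformly random `t`-element subset of an
`m`-element set `S`, and `S' ⊆ S` has `k` elements, then for every `l`,
`Prob(|T ∩ S'| ≥ l) ≤ (t·k/m)^l`. -/
theorem stmt0 {α : Type*} [DecidableEq α] (S S' : Finset α) (m k t l : ℕ)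
    (hm : 0 < m) (hS : S.card = m) (hsub : S' ⊆ S) (hk : S'.card = k) (ht : t ≤ m) :
    (((S.powersetCard t).filter (fun T => l ≤ (T ∩ S').card)).card : ℝ) / (m.choose t : ℝ)
      ≤ ((t * k : ℝ) / m) ^ l :=
  stmt0_general S S' m k t l hS hsub hk ht
end

section
/- Let S' be a set of size k and let A be an antichain of subsets of S'. If T is a uniformly random t-element subset of an m-element set S ⊇ S', then Prob(T ∩ S' ∈ A) ≤ max over r of [ C(k,r)·C(m−k, t−r) / C(m,t) ], where the maximum is over 0 ≤ r ≤ k. (This follows from the LYM inequality.) -/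
/-!
Split the sets `T` according to the trace `B = T ∩ S'`. A trace `B` comes from at most
`C(m-k, t-|B|)` sets `T`, namely one for each choice of `T \ S'`, so the count is at most
`∑_{B ∈ A} C(k,|B|)⁻¹ · C(k,|B|) C(m-k, t-|B|)`. Bounding the second factor by its maximum over
`|B| = r ≤ k`, the remaining sum `∑_{B ∈ A} C(k,|B|)⁻¹` is at most `1` by the LYM inequality.
-/

open Finset

namespace Finset

variable {α : Type*}

theorem sum_inv_choose_le_one_of_subset {𝕜 : Type*} [Semifield 𝕜] [LinearOrder 𝕜]
    [IsStrictOrderedRing 𝕜] {s : Finset α} {𝒜 : Finset (Finset α)} (h𝒜s : ∀ B ∈ 𝒜, B ⊆ s)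
    (h𝒜 : IsAntichain (· ⊆ ·) (𝒜 : Set (Finset α))) :
    ∑ B ∈ 𝒜, ((#s).choose #B : 𝕜)⁻¹ ≤ 1 := by
  classical
  let ι : Finset s → Finset α := map (Function.Embedding.subtype (· ∈ s))
  have hι : Function.Injective ι := map_injective _
  have hrange : ∀ B ∈ 𝒜, B ∈ Set.range ι := fun B hB =>
    ⟨B.subtype (· ∈ s), subtype_map_of_mem fun _ hx => h𝒜s B hB hx⟩
  have hanti : IsAntichain (· ⊆ ·) (↑(𝒜.preimage ι hι.injOn) : Set (Finset s)) := by
    rw [coe_preimage]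
    exact h𝒜.preimage hι fun _ _ => map_subset_map.2
  calc ∑ B ∈ 𝒜, ((#s).choose #B : 𝕜)⁻¹
      = ∑ C ∈ 𝒜.preimage ι hι.injOn, ((#s).choose #(ι C) : 𝕜)⁻¹ :=
        (sum_preimage ι 𝒜 hι.injOn _ fun B hB hB' => absurd (hrange B hB) hB').symm
    _ ≤ 1 := by
        simpa [ι, Fintype.card_coe] using
          lubell_yamamoto_meshalkin_inequality_sum_inv_choose (𝕜 := 𝕜) hanti

variable [DecidableEq α]

theorem card_powersetCard_filter_inter_eq_le (S S' B : Finset α) (t : ℕ) :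
    #{T ∈ S.powersetCard t | T ∩ S' = B} ≤ (#(S \ S')).choose (t - #B) := by
  rw [← card_powersetCard]
  refine card_le_card_of_injOn (· \ S') (fun T hT => ?_) fun T₁ hT₁ T₂ hT₂ h => ?_
  · simp only [coe_filter, mem_powersetCard, Set.mem_ofPred_eq] at hT
    obtain ⟨⟨hTS, hTt⟩, rfl⟩ := hT
    simp only [mem_coe, mem_powersetCard]
    refine ⟨sdiff_subset_sdiff hTS le_rfl, ?_⟩
    rw [← sdiff_inter_self_left, card_sdiff_of_subset inter_subset_left, hTt]
  · simp only [coe_filter, Set.mem_ofPred_eq] at hT₁ hT₂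
    rw [← sup_inf_sdiff T₁ S', ← sup_inf_sdiff T₂ S', inf_eq_inter, inf_eq_inter, hT₁.2, hT₂.2]
    exact congrArg (B ∪ ·) h

theorem card_powersetCard_filter_inter_mem_le (S S' : Finset α) (t : ℕ) (𝒜 : Finset (Finset α)) :
    #{T ∈ S.powersetCard t | T ∩ S' ∈ 𝒜} ≤ ∑ B ∈ 𝒜, (#(S \ S')).choose (t - #B) := by
  calc #{T ∈ S.powersetCard t | T ∩ S' ∈ 𝒜}
      = ∑ B ∈ 𝒜, #{T ∈ {T ∈ S.powersetCard t | T ∩ S' ∈ 𝒜} | T ∩ S' = B} :=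
        card_eq_sum_card_fiberwise fun T hT => (mem_filter.1 hT).2
    _ ≤ ∑ B ∈ 𝒜, (#(S \ S')).choose (t - #B) := sum_le_sum fun B _ =>
        (card_le_card (filter_subset_filter _ (filter_subset _ _))).trans
          (card_powersetCard_filter_inter_eq_le S S' B t)

theorem card_powersetCard_filter_inter_mem_le_sup' {S S' : Finset α} {t : ℕ}
    {𝒜 : Finset (Finset α)} (h𝒜S' : ∀ B ∈ 𝒜, B ⊆ S')
    (h𝒜 : IsAntichain (· ⊆ ·) (𝒜 : Set (Finset α))) :
    (#{T ∈ S.powersetCard t | T ∩ S' ∈ 𝒜} : ℝ) ≤ (range (#S' + 1)).sup' nonempty_range_add_one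
      fun r => ((#S').choose r : ℝ) * (#(S \ S')).choose (t - r) := by
  set M := (range (#S' + 1)).sup' nonempty_range_add_one
      fun r => ((#S').choose r : ℝ) * (#(S \ S')).choose (t - r)
  have hchoose_pos : ∀ B ∈ 𝒜, (0 : ℝ) < (#S').choose #B := fun B hB =>
    Nat.cast_pos.2 (Nat.choose_pos (card_le_card (h𝒜S' B hB)))
  calc (#{T ∈ S.powersetCard t | T ∩ S' ∈ 𝒜} : ℝ)
      ≤ ∑ B ∈ 𝒜, ((#(S \ S')).choose (t - #B) : ℝ) := by
        exact_mod_cast card_powersetCard_filter_inter_mem_le S S' t 𝒜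
    _ ≤ ∑ B ∈ 𝒜, ((#S').choose #B : ℝ)⁻¹ * M := by
        refine sum_le_sum fun B hB => ?_
        rw [← div_eq_inv_mul, le_div_iff₀' (hchoose_pos B hB)]
        exact le_sup' (fun r => ((#S').choose r : ℝ) * (#(S \ S')).choose (t - r))
          (mem_range_succ_iff.2 (card_le_card (h𝒜S' B hB)))
    _ = (∑ B ∈ 𝒜, ((#S').choose #B : ℝ)⁻¹) * M := (sum_mul ..).symm
    _ ≤ 1 * M := by
        gcongr
        · exact le_sup'_of_le _ (mem_range.2 (Nat.succ_pos _)) (by positivity)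
        · exact sum_inv_choose_le_one_of_subset h𝒜S' h𝒜
    _ = M := one_mul M

end Finset

/-- If `T` is a uniformly random `t`-element subset of an `m`-element set `S`,
`S' ⊆ S` has `k` elements, and `A` is an antichain of subsets of `S'`, then
`Prob(T ∩ S' ∈ A)` is at most the maximum over `0 ≤ r ≤ k` of
`C(k,r)·C(m−k,t−r)/C(m,t)`. -/
theorem stmt1 {α : Type*} [DecidableEq α] (S S' : Finset α) (m k t : ℕ)
    (hS : S.card = m) (hsub : S' ⊆ S) (hk : S'.card = k)
    (A : Finset (Finset α)) (hAsub : ∀ r ∈ A, r ⊆ S')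
    (hA : IsAntichain (· ⊆ ·) (A : Set (Finset α))) :
    (((S.powersetCard t).filter (fun T => T ∩ S' ∈ A)).card : ℝ) / (m.choose t : ℝ)
      ≤ (Finset.range (k + 1)).sup' (by simp)
          (fun r => ((k.choose r : ℝ) * ((m - k).choose (t - r) : ℝ)) / (m.choose t : ℝ)) := by
  have hcount := card_powersetCard_filter_inter_mem_le_sup' (S := S) (t := t) hAsub hA
  rw [card_sdiff_of_subset hsub, hS, hk] at hcount
  rw [← sup'_div₀ (Nat.cast_nonneg _)]
  exact div_le_div_of_nonneg_right hcount (Nat.cast_nonneg _)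
end

section
/- If a depth-2 circuit C over n input bits reads (depends on) only a set R of input bits with |R| = r ≤ n/2, and n − r is even and positive, then C fails to compute MAJ_n on at least C(n−r, (n−r)/2) · 2^(r−1) / 2 inputs; more precisely, for every assignment B to R and every assignment A to U = X∖R with weight exactly |U|/2 minus the deviation making the total weight cross n/2, the circuit errs on at least one of the pair (A⊔B, ¬A⊔B) whenever A ≠ ¬A and MAJ_n(A⊔B) ≠ MAJ_n(¬A⊔B). -/
/-- The majority function `MAJ_n` on `{0,1}^n`: outputs `1` iff the weight is at least `n/2`. -/
def majFun (n : ℕ) (x : Fin n → Bool) : Bool :=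
  decide (n ≤ 2 * (Finset.univ.filter (fun i => x i = true)).card)

/-!
`C` is constant on each fibre `{x | x|_R = B}`, whereas `MAJ_n` takes different values on the
two middle layers of the cube, of weights `⌈n/2⌉ - 1` and `⌈n/2⌉`. So on each fibre `C` is
correct on at most one of the two layers, that is on at most `C(m, m/2)` points (`m = n - r`),
and it errs on at least `C(n+1, ⌈n/2⌉) - 2^r C(m, m/2)` points of the middle layers.

With `m = 2k` and `r ≥ 1`, what remains is `C(n+1, ⌈n/2⌉) ≥ (5/4) 2^r C(2k, k)`, which reduces
to `8 C(2j, j) ≥ 5 · 4^(j-k) C(2k, k)` for `j = k + ⌊r/2⌋ + 1 ≤ 2k + 1`. As `C(2j, j) / 4^j`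
decreases in `j`, the case `j = 2k + 1` suffices, and that one follows by induction on `k`
(with equality at `k = 1`).
-/

open Finset

namespace Nat

theorem centralBinom_succ_eq_two_mul_choose (n : ℕ) :
    centralBinom (n + 1) = 2 * (2 * n + 1).choose n := by
  rw [centralBinom_eq_two_mul_choose, show 2 * (n + 1) = 2 * n + 1 + 1 by ring,
    choose_succ_succ', choose_symm_half]
  ring

theorem centralBinom_succ_le (n : ℕ) : centralBinom (n + 1) ≤ 4 * centralBinom n := by
  have hstep := succ_mul_centralBinom_succ n
  refine Nat.le_of_mul_le_mul_left ?_ (succ_pos n)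
  nlinarith

theorem centralBinom_add_le (n j : ℕ) : centralBinom (n + j) ≤ 4 ^ j * centralBinom n := by
  induction j with
  | zero => simp
  | succ j ih =>
    calc centralBinom (n + j + 1) ≤ 4 * centralBinom (n + j) := centralBinom_succ_le _
      _ ≤ 4 * (4 ^ j * centralBinom n) := Nat.mul_le_mul_left 4 ih
      _ = 4 ^ (j + 1) * centralBinom n := by ring

theorem five_mul_four_pow_mul_centralBinom_le {k : ℕ} (hk : 1 ≤ k) :
    5 * 4 ^ (k + 1) * centralBinom k ≤ 8 * centralBinom (2 * k + 1) := by
  induction k, hk using Nat.le_induction with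
  | base => decide
  | succ k hk ih =>
    have h₁ := succ_mul_centralBinom_succ k
    have h₂ : (2 * k + 2) * (2 * k + 3) * centralBinom (2 * k + 3)
        = 4 * (4 * k + 3) * (4 * k + 5) * centralBinom (2 * k + 1) := by
      linear_combination (2 * k + 2) * succ_mul_centralBinom_succ (2 * k + 2)
        + 2 * (4 * k + 5) * succ_mul_centralBinom_succ (2 * k + 1)
    have hpoly : 4 * (2 * k + 1) * (2 * k + 3) ≤ (4 * k + 3) * (4 * k + 5) := by nlinarith
    refine Nat.le_of_mul_le_mul_right (c := (k + 1) * (2 * k + 2) * (2 * k + 3)) ?_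
      (by positivity)
    calc 5 * 4 ^ (k + 1 + 1) * centralBinom (k + 1) * ((k + 1) * (2 * k + 2) * (2 * k + 3))
        = 5 * 4 ^ (k + 1) * centralBinom k * (8 * (2 * k + 1) * (2 * k + 2) * (2 * k + 3)) := by
          linear_combination 20 * 4 ^ (k + 1) * (2 * k + 2) * (2 * k + 3) * h₁
      _ ≤ 8 * centralBinom (2 * k + 1) * (8 * (2 * k + 1) * (2 * k + 2) * (2 * k + 3)) :=
          Nat.mul_le_mul_right _ ih
      _ ≤ 8 * centralBinom (2 * k + 1) * (4 * (k + 1) * (4 * k + 3) * (4 * k + 5)) := by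
          refine Nat.mul_le_mul_left _ ?_
          nlinarith [Nat.mul_le_mul_left (4 * (k + 1)) hpoly]
      _ = 8 * centralBinom (2 * (k + 1) + 1) * ((k + 1) * (2 * k + 2) * (2 * k + 3)) := by
          linear_combination 8 * (k + 1) * h₂.symm

theorem five_mul_four_pow_mul_centralBinom_le_of_le {k s : ℕ} (hk : 1 ≤ k) (hs : s ≤ k) :
    5 * 4 ^ (s + 1) * centralBinom k ≤ 8 * centralBinom (k + s + 1) := by
  have hdecay := centralBinom_add_le (k + s + 1) (k - s)
  rw [show k + s + 1 + (k - s) = 2 * k + 1 by omega] at hdecay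
  refine Nat.le_of_mul_le_mul_left (c := 4 ^ (k - s)) ?_ (by positivity)
  calc 4 ^ (k - s) * (5 * 4 ^ (s + 1) * centralBinom k) = 5 * 4 ^ (k + 1) * centralBinom k := by
        rw [show k + 1 = (k - s) + (s + 1) by omega, pow_add]; ring
    _ ≤ 8 * centralBinom (2 * k + 1) := five_mul_four_pow_mul_centralBinom_le hk
    _ ≤ 8 * (4 ^ (k - s) * centralBinom (k + s + 1)) := Nat.mul_le_mul_left 8 hdecay
    _ = 4 ^ (k - s) * (8 * centralBinom (k + s + 1)) := by ring

theorem three_mul_centralBinom_le_two_mul_choose {k : ℕ} (hk : 1 ≤ k) :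
    3 * centralBinom k ≤ 2 * (2 * k + 1).choose k := by
  have hstep := succ_mul_centralBinom_succ k
  refine Nat.le_of_mul_le_mul_left (c := k + 1) ?_ (succ_pos k)
  rw [← centralBinom_succ_eq_two_mul_choose]
  nlinarith

theorem centralBinom_mul_two_pow_add_le_choose {k r : ℕ} (hk : 1 ≤ k) (hr : r ≤ 2 * k) :
    centralBinom k * 2 ^ r + centralBinom k * 2 ^ (r - 1) / 2 ≤
      (2 * k + r + 1).choose ((2 * k + r + 1) / 2) := by
  obtain ⟨s, rfl | rfl⟩ := Nat.even_or_odd' r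
  · rw [show 2 * k + 2 * s + 1 = 2 * (k + s) + 1 by ring,
      show (2 * (k + s) + 1) / 2 = k + s by omega]
    rcases Nat.eq_zero_or_pos s with rfl | hs
    · have := three_mul_centralBinom_le_two_mul_choose hk
      simp only [mul_zero, pow_zero, zero_tsub, add_zero, mul_one]
      omega
    obtain ⟨t, rfl⟩ : ∃ t, s = t + 1 := ⟨s - 1, by omega⟩
    have hhalf := centralBinom_succ_eq_two_mul_choose (k + (t + 1))
    have hbound := five_mul_four_pow_mul_centralBinom_le_of_le hk (s := t + 1) (by omega)
    have e₁ : centralBinom k * 2 ^ (2 * (t + 1)) = 4 * (4 ^ t * centralBinom k) := by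
      rw [pow_mul]; ring
    have e₂ : centralBinom k * 2 ^ (2 * (t + 1) - 1) = 2 * (4 ^ t * centralBinom k) := by
      rw [show 2 * (t + 1) - 1 = 2 * t + 1 by omega, pow_succ, pow_mul]; ring
    have e₃ : 5 * 4 ^ (t + 1 + 1) * centralBinom k = 80 * (4 ^ t * centralBinom k) := by ring
    rw [e₁, e₂, Nat.mul_div_cancel_left _ two_pos]
    rw [e₃] at hbound
    omega
  · rw [show 2 * k + (2 * s + 1) + 1 = 2 * (k + s + 1) by ring, Nat.mul_div_cancel_left _ two_pos,
      ← centralBinom_eq_two_mul_choose, Nat.add_sub_cancel]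
    have hbound := five_mul_four_pow_mul_centralBinom_le_of_le hk (s := s) (by omega)
    have e₁ : centralBinom k * 2 ^ (2 * s + 1) = 2 * (4 ^ s * centralBinom k) := by
      rw [pow_succ, pow_mul]; ring
    have e₂ : centralBinom k * 2 ^ (2 * s) = 4 ^ s * centralBinom k := by
      rw [pow_mul]; ring
    have e₃ : 5 * 4 ^ (s + 1) * centralBinom k = 20 * (4 ^ s * centralBinom k) := by ring
    rw [e₁, e₂]
    rw [e₃] at hbound
    omega

end Nat

def weight {ι : Type*} [Fintype ι] (x : ι → Bool) : ℕ := #{i | x i = true}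

theorem majFun_eq_true_iff {n : ℕ} (x : Fin n → Bool) :
    majFun n x = true ↔ (n + 1) / 2 ≤ weight x := by
  rw [majFun, decide_eq_true_iff, weight]
  omega

section

variable {ι : Type*} [Fintype ι] [DecidableEq ι]

theorem card_weight_eq (w : ℕ) :
    #{x : ι → Bool | weight x = w} = (Fintype.card ι).choose w := by
  rw [← card_univ, ← card_powersetCard]
  refine card_nbij' (fun x => ({i | x i = true} : Finset ι)) (fun S i => decide (i ∈ S))
    ?_ ?_ ?_ ?_
  · intro x hx
    simpa [weight] using mem_filter.mp hx
  · intro S hS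
    rw [mem_coe, mem_powersetCard] at hS
    rw [mem_coe, mem_filter]
    simpa [weight] using hS.2
  · intro x _
    funext i
    simp
  · intro S _
    ext i
    simp

theorem weight_eq_add_compl (x : ι → Bool) (R : Finset ι) :
    weight x = #{i ∈ R | x i = true} + #{i ∈ Rᶜ | x i = true} := by
  simp only [weight, card_filter]
  exact (sum_add_sum_compl R _).symm

theorem card_le_choose_half_of_eqOn (R : Finset ι) (S : Finset (ι → Bool))
    (hR : ∀ x ∈ S, ∀ y ∈ S, ∀ i ∈ R, x i = y i)
    (hw : ∀ x ∈ S, ∀ y ∈ S, weight x = weight y) :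
    #S ≤ (#Rᶜ).choose (#Rᶜ / 2) := by
  rcases S.eq_empty_or_nonempty with rfl | ⟨x₀, hx₀⟩
  · simp
  calc #S ≤ #(powersetCard #{i ∈ Rᶜ | x₀ i = true} Rᶜ) := by
        refine card_le_card_of_injOn (fun x => {i ∈ Rᶜ | x i = true}) ?_ ?_
        · intro x hx
          rw [mem_coe, mem_powersetCard]
          refine ⟨filter_subset _ _, ?_⟩
          have hsame : #{i ∈ R | x i = true} = #{i ∈ R | x₀ i = true} := by
            congr 1
            exact filter_congr fun i hi => by rw [hR x hx x₀ hx₀ i hi]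
          have := hw x hx x₀ hx₀
          rw [weight_eq_add_compl x R, weight_eq_add_compl x₀ R] at this
          dsimp only
          omega
        · intro x hx y hy hxy
          funext i
          by_cases hi : i ∈ R
          · exact hR x hx y hy i hi
          · simpa [hi] using congrArg (i ∈ ·) hxy
    _ ≤ (#Rᶜ).choose (#Rᶜ / 2) := by
        rw [card_powersetCard]
        exact Nat.choose_le_middle _ _

end

def middleLayers (n : ℕ) : Finset (Fin n → Bool) :=
  {x | weight x = (n + 1) / 2 - 1 ∨ weight x = (n + 1) / 2}

theorem card_middleLayers {n : ℕ} (hn : 0 < n) :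
    #(middleLayers n) = (n + 1).choose ((n + 1) / 2) := by
  rw [middleLayers, filter_or,
    card_union_of_disjoint (disjoint_filter.2 fun x _ h₁ h₂ => by omega),
    card_weight_eq, card_weight_eq, Fintype.card_fin]
  obtain ⟨h, hh⟩ : ∃ h, (n + 1) / 2 = h + 1 := ⟨(n + 1) / 2 - 1, by omega⟩
  rw [hh, Nat.add_sub_cancel, Nat.choose_succ_succ']

theorem card_filter_middleLayers_correct_le {n : ℕ} (R : Finset (Fin n))
    (C : (Fin n → Bool) → Bool)
    (hdep : ∀ x y : Fin n → Bool, (∀ i ∈ R, x i = y i) → C x = C y) :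
    #{x ∈ middleLayers n | C x = majFun n x} ≤ (#Rᶜ).choose (#Rᶜ / 2) * 2 ^ #R := by
  set S := {x ∈ middleLayers n | C x = majFun n x}
  set trace : (Fin n → Bool) → Finset (Fin n) := fun x => {i ∈ R | x i = true}
  have heqOn : ∀ x y, trace x = trace y → ∀ i ∈ R, x i = y i := fun x y hxy i hi => by
    simpa [trace, hi] using congrArg (i ∈ ·) hxy
  calc #S ≤ (#Rᶜ).choose (#Rᶜ / 2) * #(S.image trace) := by
        refine card_le_mul_card_image S _ fun B _ => card_le_choose_half_of_eqOn R _ ?_ ?_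
        · intro x hx y hy
          rw [mem_filter] at hx hy
          exact heqOn x y (hx.2.trans hy.2.symm)
        · intro x hx y hy
          obtain ⟨⟨hxM, hxC⟩, hxB⟩ := And.imp_left mem_filter.mp (mem_filter.mp hx)
          obtain ⟨⟨hyM, hyC⟩, hyB⟩ := And.imp_left mem_filter.mp (mem_filter.mp hy)
          have hmaj : majFun n x = majFun n y := by
            rw [← hxC, ← hyC]
            exact hdep x y (heqOn x y (hxB.trans hyB.symm))
          have hiff : (n + 1) / 2 ≤ weight x ↔ (n + 1) / 2 ≤ weight y := by
            rw [← majFun_eq_true_iff, ← majFun_eq_true_iff, hmaj]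
          rw [middleLayers, mem_filter] at hxM hyM
          omega
    _ ≤ (#Rᶜ).choose (#Rᶜ / 2) * 2 ^ #R := by
        gcongr
        calc #(S.image trace) ≤ #R.powerset :=
              card_le_card (image_subset_iff.2 fun x _ => mem_powerset.2 (filter_subset _ _))
          _ = 2 ^ #R := card_powerset R

theorem choose_le_card_errors_add {n : ℕ} (hn : 0 < n) (R : Finset (Fin n))
    (C : (Fin n → Bool) → Bool)
    (hdep : ∀ x y : Fin n → Bool, (∀ i ∈ R, x i = y i) → C x = C y) :
    (n + 1).choose ((n + 1) / 2)
      ≤ #{x | C x ≠ majFun n x} + (#Rᶜ).choose (#Rᶜ / 2) * 2 ^ #R := by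
  rw [← card_middleLayers hn,
    ← card_filter_add_card_filter_not (s := middleLayers n) (fun x => C x = majFun n x)]
  have hwrong : #{x ∈ middleLayers n | ¬C x = majFun n x} ≤ #{x | C x ≠ majFun n x} :=
    card_le_card fun x hx => mem_filter.2 ⟨mem_univ x, (mem_filter.1 hx).2⟩
  have hright := card_filter_middleLayers_correct_le R C hdep
  omega

/-- A circuit reading only a set `R` of `r ≤ n/2` input bits (with `n − r` even and positive)
errs on `MAJ_n` on at least `C(n−r,(n−r)/2)·2^(r−1)/2` inputs; more precisely, for any pair of
assignments agreeing on `R` and complementary outside `R` on which `MAJ_n` differs,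
the circuit errs on at least one member of the pair. -/
theorem stmt6 (n r : ℕ) (hr : r ≤ n / 2) (hpos : 0 < n - r) (heven : Even (n - r))
    (R : Finset (Fin n)) (hR : R.card = r)
    (C : (Fin n → Bool) → Bool)
    (hdep : ∀ x y : Fin n → Bool, (∀ i ∈ R, x i = y i) → C x = C y) :
    (n - r).choose ((n - r) / 2) * 2 ^ (r - 1) / 2
        ≤ (Finset.univ.filter (fun x : Fin n → Bool => C x ≠ majFun n x)).card ∧
    (∀ x y : Fin n → Bool, (∀ i ∈ R, x i = y i) → (∀ i ∉ R, y i = ! x i) →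
        majFun n x ≠ majFun n y → (C x ≠ majFun n x ∨ C y ≠ majFun n y)) := by
  refine ⟨?_, fun x y hxy _ hmaj => ?_⟩
  · obtain ⟨k, hk⟩ := heven
    have hcompl : #Rᶜ = 2 * k := by rw [card_compl, Fintype.card_fin, hR]; omega
    have hcount := choose_le_card_errors_add (by omega) R C hdep
    have hbinom := Nat.centralBinom_mul_two_pow_add_le_choose (k := k) (r := r) (by omega)
      (by omega)
    rw [hcompl, hR, Nat.mul_div_cancel_left k two_pos, ← Nat.centralBinom_eq_two_mul_choose]
      at hcount
    rw [show 2 * k + r + 1 = n + 1 by omega] at hbinom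
    rw [show n - r = 2 * k by omega, Nat.mul_div_cancel_left k two_pos,
      ← Nat.centralBinom_eq_two_mul_choose]
    omega
  · by_contra! hcorrect
    exact hmaj (hcorrect.1.symm.trans ((hdep x y hxy).trans hcorrect.2))
end

section
/- If there exists a deterministic MAJ_k ∘ MAJ_k circuit computing MAJ_n (n odd) correctly on at least a (1−ε) fraction of all minterms and maxterms of MAJ_n, then there exists a distribution over MAJ_k ∘ MAJ_k circuits (obtained by permuting the inputs of the given circuit uniformly at random) that computes MAJ_n correctly on every input with probability at least 1 − 2ε. -/
open Finset

/-- A monotone threshold gate over `n` inputs with total weight at most `k`. -/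
structure ThresholdGate (n k : ℕ) where
  w : Fin n → ℕ
  thr : ℕ
  hw : ∑ i, w i ≤ k

/-- Evaluation of a threshold gate. -/
def ThresholdGate.eval {n k : ℕ} (g : ThresholdGate n k) (x : Fin n → Bool) : Bool :=
  decide (g.thr ≤ ∑ i, g.w i * (if x i then 1 else 0))

/-- A `MAJ_k ∘ MAJ_k` circuit: a depth-2 formula of monotone threshold gates of fan-in
(total weight) at most `k`. -/
structure Maj2Circuit (n k : ℕ) where
  bottom : Fin k → ThresholdGate n k
  topw : Fin k → ℕ
  topthr : ℕ
  htop : ∑ j, topw j ≤ k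

/-- Evaluation of a `MAJ_k ∘ MAJ_k` circuit. -/
def Maj2Circuit.eval {n k : ℕ} (c : Maj2Circuit n k) (x : Fin n → Bool) : Bool :=
  decide (c.topthr ≤ ∑ j, c.topw j * (if (c.bottom j).eval x then 1 else 0))

/-- The weight of an assignment. -/
def wt {n : ℕ} (x : Fin n → Bool) : ℕ := (Finset.univ.filter (fun i => x i = true)).card

/-!
Monotonicity reduces correctness everywhere to correctness on minterms and maxterms: if
`MAJ_n(x) = 1`, pick a minterm `a ≤ x`; whenever the permuted circuit accepts `a ∘ σ` it
accepts `x ∘ σ`, and dually with a maxterm above `x` when `MAJ_n(x) = 0`. For a fixed input `a`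
of weight `m`, `a ∘ σ` is uniformly distributed over the weight-`m` inputs as `σ` ranges over
the permutations, so the permuted circuit is correct on `a` with the same probability as the
circuit is on a uniformly random minterm (resp. maxterm). Since there are as many minterms as
maxterms, an error rate of `ε` over both layers is at most `2ε` on each.
-/

section

open Equiv Nat
open scoped Pointwise

variable {n : ℕ}

lemma ite_one_zero_monotone : Monotone fun b : Bool => if b then (1 : ℕ) else 0 := by
  intro a b h
  revert h
  cases a <;> cases b <;> decide

lemma ThresholdGate.eval_monotone {k : ℕ} (g : ThresholdGate n k) : Monotone g.eval :=
  fun _ _ hxy => Bool.le_iff_imp.2 fun h => by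
    simp only [ThresholdGate.eval, decide_eq_true_eq] at h ⊢
    exact h.trans (sum_le_sum fun i _ => Nat.mul_le_mul_left _ (ite_one_zero_monotone (hxy i)))

lemma Maj2Circuit.eval_monotone {k : ℕ} (c : Maj2Circuit n k) : Monotone c.eval :=
  fun _ _ hxy => Bool.le_iff_imp.2 fun h => by
    simp only [Maj2Circuit.eval, decide_eq_true_eq] at h ⊢
    exact h.trans (sum_le_sum fun j _ =>
      Nat.mul_le_mul_left _ (ite_one_zero_monotone ((c.bottom j).eval_monotone hxy)))

lemma wt_comp_perm (x : Fin n → Bool) (σ : Perm (Fin n)) : wt (x ∘ σ) = wt x := by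
  simpa [wt, Fintype.card_subtype] using Fintype.card_congr
    (σ.subtypeEquiv (p := fun i => x (σ i) = true) (q := fun i => x i = true) fun _ => Iff.rfl)

lemma wt_decide_mem (s : Finset (Fin n)) : wt (fun i => decide (i ∈ s)) = #s := by
  simp [wt]

lemma wt_le (x : Fin n → Bool) : wt x ≤ n :=
  (card_filter_le _ _).trans_eq (Finset.card_fin n)

lemma wt_bot : wt (⊥ : Fin n → Bool) = 0 := by
  simp [wt]

lemma wt_top : wt (⊤ : Fin n → Bool) = n := by
  simp [wt]

lemma card_wt_eq (m : ℕ) : #{y : Fin n → Bool | wt y = m} = n.choose m := by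
  rw [show n.choose m = #(powersetCard m (univ : Finset (Fin n))) by simp]
  exact card_nbij' (fun y => univ.filter fun i => y i = true) (fun s i => decide (i ∈ s))
    (fun y hy => by simpa [wt] using (mem_filter.1 (mem_coe.1 hy)).2)
    (fun s hs => by simpa [wt_decide_mem] using hs) (fun y _ => by ext; simp)
    (fun s _ => by ext; simp)

lemma card_wt_eq_and_le (P : (Fin n → Bool) → Prop) [DecidablePred P] (m : ℕ) :
    #{y : Fin n → Bool | wt y = m ∧ P y} ≤ n.choose m :=
  (card_le_card fun y hy => by simp_all).trans_eq (card_wt_eq m)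

lemma exists_wt_eq_of_le {x y : Fin n → Bool} (hxy : x ≤ y) {m : ℕ} (hx : wt x ≤ m)
    (hy : m ≤ wt y) : ∃ z, x ≤ z ∧ z ≤ y ∧ wt z = m := by
  obtain ⟨u, hxu, huy, rfl⟩ := exists_subsuperset_card_eq
    (fun i hi => by simpa using Bool.le_iff_imp.1 (hxy i) (by simpa using hi)) hx hy
  refine ⟨fun i => decide (i ∈ u), fun i => Bool.le_iff_imp.2 fun h => ?_,
    fun i => Bool.le_iff_imp.2 fun h => ?_, wt_decide_mem u⟩
  · simpa using hxu (by simpa using h)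
  · simpa using huy (by simpa using h)

lemma exists_perm_eq_comp_of_wt_eq {x y : Fin n → Bool} (h : wt y = wt x) :
    ∃ σ : Perm (Fin n), y = x ∘ σ := by
  obtain ⟨σ, hσ⟩ :=
    (Set.powersetCard.isPretransitive (α := Fin n) (n := wt x)).exists_smul_eq
    (Set.powersetCard.ofCard (s := {i | x i = true}) rfl)
    (Set.powersetCard.ofCard (s := {i | y i = true}) h)
  have hsupp : σ • univ.filter (fun i => x i = true) = univ.filter (fun i => y i = true) :=
    congrArg Subtype.val hσ
  refine ⟨σ⁻¹, funext fun i => Bool.eq_iff_iff.2 ?_⟩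
  have hi := Finset.inv_smul_mem_iff (a := σ) (b := i) (s := univ.filter fun i => x i = true)
  rw [hsupp] at hi
  simpa using hi.symm

section Counting

variable (P : (Fin n → Bool) → Prop) [DecidablePred P]

lemma card_perm_comp_eq_of_wt_eq {x y : Fin n → Bool} (h : wt y = wt x) :
    #{σ : Perm (Fin n) | P (y ∘ σ)} = #{σ : Perm (Fin n) | P (x ∘ σ)} := by
  obtain ⟨τ, rfl⟩ := exists_perm_eq_comp_of_wt_eq h
  exact card_equiv (Equiv.mulLeft τ) (by simp [Perm.coe_mul, Function.comp_assoc])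

lemma card_wt_eq_and_comp_perm (m : ℕ) (σ : Perm (Fin n)) :
    #{y : Fin n → Bool | wt y = m ∧ P (y ∘ σ)} = #{y : Fin n → Bool | wt y = m ∧ P y} :=
  card_nbij' (· ∘ σ) (· ∘ σ.symm) (fun y hy => by simp_all [wt_comp_perm])
    (fun y hy => by simp_all [wt_comp_perm, Function.comp_assoc])
    (fun y _ => by simp [Function.comp_assoc]) (fun y _ => by simp [Function.comp_assoc])

/-- `x ∘ σ` for a uniform permutation `σ` is a uniform input of weight `wt x`. -/
theorem card_perm_comp_mul_choose (x : Fin n → Bool) :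
    #{σ : Perm (Fin n) | P (x ∘ σ)} * n.choose (wt x)
      = n ! * #{y : Fin n → Bool | wt y = wt x ∧ P y} := by
  calc #{σ : Perm (Fin n) | P (x ∘ σ)} * n.choose (wt x)
      = ∑ y with wt y = wt x, #{σ : Perm (Fin n) | P (y ∘ σ)} := by
        rw [sum_congr rfl fun y hy => card_perm_comp_eq_of_wt_eq P (mem_filter.1 hy).2,
          sum_const, smul_eq_mul, card_wt_eq, mul_comm]
    _ = ∑ σ : Perm (Fin n), #{y : Fin n → Bool | wt y = wt x ∧ P (y ∘ σ)} := by
        simpa [bipartiteAbove, bipartiteBelow, filter_filter] using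
          sum_card_bipartiteAbove_eq_sum_card_bipartiteBelow
            (s := {y : Fin n → Bool | wt y = wt x}) (t := univ)
            (r := fun y (σ : Perm (Fin n)) => P (y ∘ σ))
    _ = n ! * #{y : Fin n → Bool | wt y = wt x ∧ P y} := by
        simp [card_wt_eq_and_comp_perm, Fintype.card_perm]

lemma le_card_perm_comp_of_le_card (x : Fin n → Bool) {p : ℝ}
    (h : p * n.choose (wt x) ≤ #{y : Fin n → Bool | wt y = wt x ∧ P y}) :
    p * n ! ≤ #{σ : Perm (Fin n) | P (x ∘ σ)} := by
  have hpos : (0 : ℝ) < n.choose (wt x) := by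
    exact_mod_cast choose_pos (wt_le x)
  have hcount : (#{σ : Perm (Fin n) | P (x ∘ σ)} * n.choose (wt x) : ℝ)
      = n ! * #{y : Fin n → Bool | wt y = wt x ∧ P y} := by
    exact_mod_cast card_perm_comp_mul_choose P x
  refine le_of_mul_le_mul_right ?_ hpos
  calc p * n ! * n.choose (wt x)
      = p * n.choose (wt x) * n ! := by ring
    _ ≤ #{y : Fin n → Bool | wt y = wt x ∧ P y} * n ! := by gcongr
    _ = _ := by rw [hcount, mul_comm]

end Counting

lemma majFun_eq_decide (x : Fin n → Bool) : majFun n x = decide (n ≤ 2 * wt x) := rfl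

variable {f : (Fin n → Bool) → Bool} {m : ℕ} {p : ℝ}

lemma Monotone.le_card_perm_comp_eq_majFun_of_le (hf : Monotone f) (hm : n ≤ 2 * m)
    (h : p * n.choose m ≤ #{y : Fin n → Bool | wt y = m ∧ f y = majFun n y})
    {x : Fin n → Bool} (hx : m ≤ wt x) :
    p * n ! ≤ #{σ : Perm (Fin n) | f (x ∘ σ) = majFun n x} := by
  obtain ⟨a, -, hax, rfl⟩ := exists_wt_eq_of_le bot_le (by simp [wt_bot]) hx
  have hlayer : #{y : Fin n → Bool | wt y = wt a ∧ f y = majFun n y}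
      = #{y : Fin n → Bool | wt y = wt a ∧ f y = true} :=
    congrArg card <| filter_congr fun y _ => and_congr_right fun hy => by
      rw [majFun_eq_decide, hy, decide_eq_true hm]
  rw [hlayer] at h
  rw [majFun_eq_decide, decide_eq_true (hm.trans (by omega))]
  refine (le_card_perm_comp_of_le_card (f · = true) a h).trans ?_
  exact_mod_cast card_le_card fun σ hσ => by
    simp only [mem_filter, mem_univ, true_and] at hσ ⊢
    exact Bool.le_iff_imp.1 (hf fun i => hax (σ i)) hσ

lemma Monotone.le_card_perm_comp_eq_majFun_of_ge (hf : Monotone f) (hm : 2 * m < n)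
    (h : p * n.choose m ≤ #{y : Fin n → Bool | wt y = m ∧ f y = majFun n y})
    {x : Fin n → Bool} (hx : wt x ≤ m) :
    p * n ! ≤ #{σ : Perm (Fin n) | f (x ∘ σ) = majFun n x} := by
  obtain ⟨b, hxb, -, rfl⟩ := exists_wt_eq_of_le le_top hx (by simp [wt_top]; omega)
  have hlayer : #{y : Fin n → Bool | wt y = wt b ∧ f y = majFun n y}
      = #{y : Fin n → Bool | wt y = wt b ∧ f y = false} :=
    congrArg card <| filter_congr fun y _ => and_congr_right fun hy => by
      rw [majFun_eq_decide, hy, decide_eq_false (by omega)]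
  rw [hlayer] at h
  rw [majFun_eq_decide, decide_eq_false (by omega)]
  refine (le_card_perm_comp_of_le_card (f · = false) b h).trans ?_
  exact_mod_cast card_le_card fun σ hσ => by
    simp only [mem_filter, mem_univ, true_and, Bool.eq_false_iff] at hσ ⊢
    exact fun hxσ => hσ (Bool.le_iff_imp.1 (hf fun i => hxb (σ i)) hxσ)

lemma card_filter_or_and {α : Type*} [Fintype α] (p q r : α → Prop) [DecidablePred p]
    [DecidablePred q] [DecidablePred r] (hpq : ∀ a, p a → ¬ q a) :
    #{a | (p a ∨ q a) ∧ r a} = #{a | p a ∧ r a} + #{a | q a ∧ r a} := by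
  classical
  rw [← card_union_of_disjoint (disjoint_filter.2 fun a _ ha hb => hpq a ha.1 hb.1)]
  congr 1
  ext a
  simp only [mem_filter, mem_union, mem_univ, true_and]
  tauto

lemma le_card_wt_and_of_le_card_wt_or (P : (Fin n → Bool) → Prop) [DecidablePred P] {a b : ℕ}
    (hab : a ≠ b) (hC : n.choose a = n.choose b) {ε : ℝ}
    (h : (1 - ε) * #{y : Fin n → Bool | wt y = a ∨ wt y = b}
      ≤ #{y : Fin n → Bool | (wt y = a ∨ wt y = b) ∧ P y}) :
    (1 - 2 * ε) * n.choose a ≤ #{y : Fin n → Bool | wt y = a ∧ P y} ∧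
      (1 - 2 * ε) * n.choose b ≤ #{y : Fin n → Bool | wt y = b ∧ P y} := by
  have hne : ∀ y : Fin n → Bool, wt y = a → ¬ wt y = b := fun y ha hb => hab (ha ▸ hb)
  have hall := card_filter_or_and _ _ (fun _ => True) hne
  simp only [and_true] at hall
  rw [hall, card_filter_or_and _ _ _ hne, card_wt_eq, card_wt_eq, ← hC] at h
  have ha := card_wt_eq_and_le P a
  have hb := card_wt_eq_and_le P b
  rw [← hC] at hb ⊢
  push_cast at h
  constructor <;> linarith [(Nat.cast_le (α := ℝ)).2 ha, (Nat.cast_le (α := ℝ)).2 hb]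

end

theorem stmt7_general (n k : ℕ) (hodd : Odd n) (ε : ℝ) (c : Maj2Circuit n k)
    (hcorrect :
      (1 - ε) * ((Finset.univ.filter
          (fun x : Fin n → Bool => wt x = (n + 1) / 2 ∨ wt x = (n - 1) / 2)).card : ℝ)
        ≤ ((Finset.univ.filter (fun x : Fin n → Bool =>
            (wt x = (n + 1) / 2 ∨ wt x = (n - 1) / 2) ∧ c.eval x = majFun n x)).card : ℝ)) :
    ∀ x : Fin n → Bool,
      (1 - 2 * ε) * (Nat.factorial n : ℝ)
        ≤ ((Finset.univ.filter (fun σ : Equiv.Perm (Fin n) =>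
            c.eval (fun i => x (σ i)) = majFun n x)).card : ℝ) := by
  intro x
  obtain ⟨t, rfl⟩ := hodd
  rw [show (2 * t + 1 + 1) / 2 = t + 1 by omega, show (2 * t + 1 - 1) / 2 = t by omega] at hcorrect
  obtain ⟨hmin, hmax⟩ :=
    le_card_wt_and_of_le_card_wt_or _ (by omega) (Nat.choose_symm_half t) hcorrect
  by_cases hx : t + 1 ≤ wt x
  · exact c.eval_monotone.le_card_perm_comp_eq_majFun_of_le (by omega) hmin hx
  · exact c.eval_monotone.le_card_perm_comp_eq_majFun_of_ge (by omega) hmax (by omega)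

/-- If a deterministic `MAJ_k ∘ MAJ_k` circuit computes `MAJ_n` (n odd) correctly on at least
a `1−ε` fraction of all minterms and maxterms, then the random circuit obtained by permuting
its inputs uniformly computes `MAJ_n` correctly on every input with probability
at least `1 − 2ε`. -/
theorem stmt7 (n k : ℕ) (hodd : Odd n) (ε : ℝ) (hε : 0 ≤ ε) (c : Maj2Circuit n k)
    (hcorrect :
      (1 - ε) * ((Finset.univ.filter
          (fun x : Fin n → Bool => wt x = (n + 1) / 2 ∨ wt x = (n - 1) / 2)).card : ℝ)
        ≤ ((Finset.univ.filter (fun x : Fin n → Bool =>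
            (wt x = (n + 1) / 2 ∨ wt x = (n - 1) / 2) ∧ c.eval x = majFun n x)).card : ℝ)) :
    ∀ x : Fin n → Bool,
      (1 - 2 * ε) * (Nat.factorial n : ℝ)
        ≤ ((Finset.univ.filter (fun σ : Equiv.Perm (Fin n) =>
            c.eval (fun i => x (σ i)) = majFun n x)).card : ℝ) :=
  stmt7_general n k hodd ε c hcorrect
end

section
/- Let G be a graph with n = 2l+1 vertices and n−2 edges. Then there exists a set Z of exactly l vertices such that the number of edges of G having at least one endpoint in Z is at most l−1. -/
/-!
Write `defect S = |S| - e(S)`, where `e(S)` is the number of edges inside `S`. The edges with an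
endpoint in `Z` are those not inside `W = Zᶜ`, so it suffices to find `W` with `l + 1` vertices and
defect at most `1`, while the whole vertex set has defect at most `2`.

Defect is additive over disjoint unions with a closed set (a union of components), and adding a
vertex adjacent to the set does not increase it. Hence a closed set `U` of defect at most `D ≥ 1`
contains sets of every size with defect at most `D`: if some closed `X ⊂ U` has defect at least `D`,
then `U \ X` has defect at most `0` and one fills up `U \ X` before `X`; otherwise one grows the set
along edges, jumping to a new vertex only when the set is closed. This settles the case where the
whole vertex set has defect at most `1`. Otherwise its defect is `2`; a smallest closed set `X` of
positive defect (a tree component) has only closed proper subsets of defect at most `0`, so its own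
defect is `1`. Then `Xᶜ` has defect `1` too, so by minimality it contains at least half of the
vertices, and we apply the above to `U = Xᶜ`.
-/

open Finset

namespace SimpleGraph

variable {V : Type*}

def AdjClosed (G : SimpleGraph V) (s : Finset V) : Prop :=
  ∀ ⦃u v : V⦄, G.Adj u v → u ∈ s → v ∈ s

theorem AdjClosed.sdiff [DecidableEq V] {G : SimpleGraph V} {s t : Finset V}
    (hs : G.AdjClosed s) (ht : G.AdjClosed t) : G.AdjClosed (s \ t) := by
  intro u v huv hu
  rw [mem_sdiff] at hu ⊢
  exact ⟨hs huv hu.1, fun hv => hu.2 (ht huv.symm hv)⟩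

variable [Fintype V] [DecidableEq V] (G : SimpleGraph V) [DecidableRel G.Adj]

def edgesWithin (s : Finset V) : Finset (Sym2 V) :=
  G.edgeFinset.filter (· ∈ s.sym2)

def defect (s : Finset V) : ℤ :=
  s.card - (G.edgesWithin s).card

variable {G}

theorem edgesWithin_mono {s t : Finset V} (h : s ⊆ t) : G.edgesWithin s ⊆ G.edgesWithin t :=
  fun _ he => mem_filter.mpr ⟨(mem_filter.mp he).1, sym2_mono h (mem_filter.mp he).2⟩

theorem defect_empty : G.defect ∅ = 0 := by
  simp [defect, edgesWithin]

theorem defect_insert_le_succ (x : V) (s : Finset V) :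
    G.defect (insert x s) ≤ G.defect s + 1 := by
  have := card_le_card (G.edgesWithin_mono (subset_insert x s))
  have := card_insert_le x s
  unfold defect
  omega

theorem defect_insert_le_of_adj {s : Finset V} {u x : V} (hu : u ∈ s) (hx : x ∉ s)
    (hux : G.Adj u x) : G.defect (insert x s) ≤ G.defect s := by
  have hnew : s(u, x) ∉ G.edgesWithin s := fun h =>
    hx ((mem_sym2_iff.mp (mem_filter.mp h).2) x (Sym2.mem_mk_right u x))
  have hsub : insert s(u, x) (G.edgesWithin s) ⊆ G.edgesWithin (insert x s) := by
    refine insert_subset (mem_filter.mpr ⟨mem_edgeFinset.mpr hux, ?_⟩)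
      (G.edgesWithin_mono (subset_insert x s))
    exact mk_mem_sym2_iff.mpr ⟨mem_insert_of_mem hu, mem_insert_self x s⟩
  have := card_le_card hsub
  rw [card_insert_of_notMem hnew] at this
  unfold defect
  rw [card_insert_of_notMem hx]
  omega

theorem defect_union_of_adjClosed {s t : Finset V} (hs : G.AdjClosed s) (hst : Disjoint s t) :
    G.defect (s ∪ t) = G.defect s + G.defect t := by
  have hsplit : G.edgesWithin (s ∪ t) = G.edgesWithin s ∪ G.edgesWithin t := by
    ext e
    induction e with
    | _ a b =>
    simp only [edgesWithin, mem_union, mem_filter, mk_mem_sym2_iff, mem_edgeFinset, mem_edgeSet]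
    constructor
    · rintro ⟨hab, ha | ha, hb | hb⟩
      · exact Or.inl ⟨hab, ⟨ha, hb⟩⟩
      · exact Or.inl ⟨hab, ⟨ha, hs hab ha⟩⟩
      · exact Or.inl ⟨hab, ⟨hs hab.symm hb, hb⟩⟩
      · exact Or.inr ⟨hab, ⟨ha, hb⟩⟩
    · rintro (⟨hab, ha, hb⟩ | ⟨hab, ha, hb⟩)
      · exact ⟨hab, Or.inl ha, Or.inl hb⟩
      · exact ⟨hab, Or.inr ha, Or.inr hb⟩
  have hdisj : Disjoint (G.edgesWithin s) (G.edgesWithin t) := by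
    rw [Finset.disjoint_left]
    intro e hes het
    have ha := Sym2.out_fst_mem e
    exact Finset.disjoint_left.mp hst (mem_sym2_iff.mp (mem_filter.mp hes).2 _ ha)
      (mem_sym2_iff.mp (mem_filter.mp het).2 _ ha)
  unfold defect
  rw [hsplit, card_union_of_disjoint hst, card_union_of_disjoint hdisj]
  push_cast
  ring

theorem AdjClosed.exists_card_eq_defect_le_of_forall_ssubset {U : Finset V} (hU : G.AdjClosed U)
    {d : ℤ} (hd0 : 0 ≤ d) (hd : ∀ X ⊂ U, G.AdjClosed X → G.defect X + 1 ≤ d) {k : ℕ}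
    (hk : k ≤ U.card) : ∃ W ⊆ U, W.card = k ∧ G.defect W ≤ d := by
  induction k with
  | zero => exact ⟨∅, empty_subset U, card_empty, by rwa [defect_empty]⟩
  | succ k ih =>
    obtain ⟨W, hWU, hWk, hW⟩ := ih (by omega)
    have hWU' : W ⊂ U := ssubset_of_subset_of_ne hWU (by rintro rfl; omega)
    by_cases hWc : G.AdjClosed W
    · obtain ⟨x, hxU, hxW⟩ := exists_of_ssubset hWU'
      refine ⟨insert x W, insert_subset hxU hWU, by rw [card_insert_of_notMem hxW, hWk], ?_⟩
      linarith [G.defect_insert_le_succ x W, hd W hWU' hWc]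
    · simp only [AdjClosed, not_forall] at hWc
      obtain ⟨u, x, hux, huW, hxW⟩ := hWc
      refine ⟨insert x W, insert_subset (hU hux (hWU huW)) hWU,
        by rw [card_insert_of_notMem hxW, hWk], ?_⟩
      exact (defect_insert_le_of_adj huW hxW hux).trans hW

theorem AdjClosed.exists_card_eq_defect_le {U : Finset V} (hU : G.AdjClosed U) {D : ℤ}
    (hD : 1 ≤ D) (hUD : G.defect U ≤ D) {k : ℕ} (hk : k ≤ U.card) :
    ∃ W ⊆ U, W.card = k ∧ G.defect W ≤ D := by
  induction U using Finset.strongInduction generalizing D k with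
  | H U ih =>
  by_cases hsplit : ∃ X ⊂ U, G.AdjClosed X ∧ D ≤ G.defect X
  · obtain ⟨X, hXU, hX, hDX⟩ := hsplit
    have hR : G.AdjClosed (U \ X) := hU.sdiff hX
    have hdef : G.defect U = G.defect X + G.defect (U \ X) := by
      rw [← defect_union_of_adjClosed hX disjoint_sdiff, union_sdiff_of_subset hXU.subset]
    have hXne : X.Nonempty := by
      rw [nonempty_iff_ne_empty]
      rintro rfl
      rw [defect_empty] at hDX
      omega
    have hcard : (U \ X).card + X.card = U.card := card_sdiff_add_card_eq_card hXU.subset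
    rcases le_or_gt k (U \ X).card with hkR | hkR
    · obtain ⟨W, hWR, hWk, hW⟩ :=
        ih (U \ X) (sdiff_ssubset hXU.subset hXne) hR hD (by omega) hkR
      exact ⟨W, hWR.trans sdiff_subset, hWk, hW⟩
    · obtain ⟨W, hWX, hWk, hW⟩ :=
        ih X hXU hX (hD.trans hDX) le_rfl (k := k - (U \ X).card) (by omega)
      have hdisj : Disjoint (U \ X) W := disjoint_of_subset_right hWX sdiff_disjoint
      refine ⟨U \ X ∪ W, union_subset sdiff_subset (hWX.trans hXU.subset), ?_, ?_⟩
      · rw [card_union_of_disjoint hdisj, hWk]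
        omega
      · rw [defect_union_of_adjClosed hR hdisj]
        linarith
  · push Not at hsplit
    exact hU.exists_card_eq_defect_le_of_forall_ssubset (by omega)
      (fun X hXU hX => by linarith [hsplit X hXU hX]) hk

theorem exists_card_eq_defect_le_one (hV : G.defect univ ≤ 2) {k : ℕ}
    (hk : 2 * k ≤ Fintype.card V + 1) : ∃ W : Finset V, W.card = k ∧ G.defect W ≤ 1 := by
  have huniv : G.AdjClosed univ := fun _ _ _ _ => mem_univ _
  rcases le_or_gt (G.defect univ) 1 with h1 | h2
  · obtain ⟨W, -, hW⟩ :=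
      huniv.exists_card_eq_defect_le le_rfl h1 (k := k) (by rw [card_univ]; omega)
    exact ⟨W, hW⟩
  classical
  obtain ⟨X, hXmem, hXmin⟩ := exists_min_image
    (univ.filter fun X : Finset V => G.AdjClosed X ∧ 1 ≤ G.defect X) card
    ⟨univ, by simp [huniv, h2.le]⟩
  simp only [mem_filter, mem_univ, true_and, and_imp] at hXmem hXmin
  obtain ⟨hX, hX1⟩ := hXmem
  have hXsub : ∀ Y ⊂ X, G.AdjClosed Y → G.defect Y + 1 ≤ 1 := by
    intro Y hYX hY
    by_contra! h
    exact (card_lt_card hYX).not_ge (hXmin Y hY (by omega))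
  have hXdef : G.defect X ≤ 1 := by
    obtain ⟨W, hWX, hWk, hW⟩ :=
      hX.exists_card_eq_defect_le_of_forall_ssubset zero_le_one hXsub le_rfl
    rwa [eq_of_subset_of_card_le hWX hWk.ge] at hW
  have hXc : G.AdjClosed (univ \ X) := huniv.sdiff hX
  have hdef : G.defect univ = G.defect X + G.defect (univ \ X) := by
    rw [← defect_union_of_adjClosed hX disjoint_sdiff, union_sdiff_of_subset (subset_univ X)]
  have hcard : X.card ≤ (univ \ X).card := hXmin _ hXc (by omega)
  rw [card_univ_sdiff] at hcard
  obtain ⟨W, -, hW⟩ := hXc.exists_card_eq_defect_le le_rfl (by omega) (k := k)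
    (by rw [card_univ_sdiff]; omega)
  exact ⟨W, hW⟩

theorem card_filter_exists_mem_compl_eq (W : Finset V) :
    (G.edgeFinset.filter fun e => ∃ v ∈ Wᶜ, v ∈ e).card =
      G.edgeFinset.card - (G.edgesWithin W).card := by
  have : (G.edgeFinset.filter fun e => ∃ v ∈ Wᶜ, v ∈ e) = G.edgeFinset \ G.edgesWithin W := by
    ext e
    simp only [edgesWithin, mem_sdiff, mem_filter, mem_sym2_iff, mem_compl]
    grind
  rw [this, card_sdiff_of_subset (s := G.edgesWithin W) (filter_subset _ _)]

end SimpleGraph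

open SimpleGraph

theorem stmt11_general {V : Type*} [Fintype V] [DecidableEq V] (G : SimpleGraph V)
    [DecidableRel G.Adj] (l : ℕ) (hv : Fintype.card V = 2 * l + 1)
    (he : G.edgeFinset.card = 2 * l + 1 - 2) :
    ∃ Z : Finset V, Z.card = l ∧
      (G.edgeFinset.filter (fun e => ∃ v ∈ Z, v ∈ e)).card ≤ l - 1 := by
  have hV : G.defect univ ≤ 2 := by
    have : G.edgesWithin univ = G.edgeFinset := filter_true_of_mem fun e _ => by simp
    rw [defect, this, card_univ, hv, he]
    omega
  obtain ⟨W, hWcard, hW⟩ := G.exists_card_eq_defect_le_one hV (k := l + 1) (by omega)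
  refine ⟨Wᶜ, by rw [card_compl, hv, hWcard]; omega, ?_⟩
  rw [card_filter_exists_mem_compl_eq]
  have := card_le_card (G.edgesWithin_mono (subset_univ W))
  unfold defect at hW
  omega

/-- In a graph with `n = 2l+1` vertices and `n − 2` edges there is a set `Z` of exactly `l`
vertices such that at most `l − 1` edges have an endpoint in `Z`. -/
theorem stmt11 {V : Type*} [Fintype V] [DecidableEq V] (G : SimpleGraph V)
    [DecidableRel G.Adj] (l : ℕ) (hl : 1 ≤ l) (hv : Fintype.card V = 2 * l + 1)
    (he : G.edgeFinset.card = 2 * l + 1 - 2) :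
    ∃ Z : Finset V, Z.card = l ∧
      (G.edgeFinset.filter (fun e => ∃ v ∈ Z, v ∈ e)).card ≤ l - 1 :=
  stmt11_general G l hv he
end
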